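/- Let A be a bounded measurable subset of ℝ^d with finite positive Lebesgue measure μ(A) and diameter diam(A), and let S be a bounded subset of ℝ^m with diameter diam(S). Let g : ℝ^d → ℝ^m be a measurable map with g(A) ⊆ S, and let F : ℝ^m × ℝ^d → ℝ satisfy |F(s, a) − F(s, a')| ≤ L‖a − a'‖ and |F(s, a) − F(s', a)| ≤ L‖s − s'‖ for all s, s' ∈ S and a, a' ∈ A. Let a_1, …, a_K be independent random variables, each uniformly distributed on A. Then for every t > 0, the probability that |(μ(A)/K) · Σ_{k=1}^K F(g(a_k), a_k) − ∫_A F(g(a), a) da| ≥ t is at most 2·exp(−K t² / (2 (L · μ(A) · (diam(A) + diam(S)))²)). -/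

import Mathlib

/-!
Write `f x = F (g x) x`. Splitting `f x - f y` through `F (g x) y`, the two Lipschitz bounds and
the diameters give `|f x - f y| ≤ |L| (diam A + diam S)` on `A`. Hence the samples `f (a k)` are
independent, lie in an interval of length `2 |L| (diam A + diam S)`, and have mean
`μ(A)⁻¹ ∫_A f`; Hoeffding's inequality on both tails of their centred sum, rescaled by `μ(A)/K`,
is the claim. No measurability of `F` is needed: being separately Lipschitz, `F` is continuous on
`S × A`, so `f` is a.e.-measurable on `A`, which suffices since the samples lie in `A` almost
surely.
-/

open MeasureTheory ProbabilityTheory Real Set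

open Finset in
theorem measureReal_abs_sum_sub_integral_ge_le_of_iIndepFun {Ω ι : Type*} [MeasurableSpace Ω]
    {μ : Measure Ω} [IsProbabilityMeasure μ] {X : ι → Ω → ℝ} (h_indep : iIndepFun X μ)
    (hX : ∀ i, AEMeasurable (X i) μ) {a b : ℝ} (hab : ∀ i, ∀ᵐ ω ∂μ, X i ω ∈ Icc a b)
    (s : Finset ι) {ε : ℝ} (hε : 0 ≤ ε) :
    μ.real {ω | ε ≤ |∑ i ∈ s, (X i ω - μ[X i])|} ≤ 2 * exp (-2 * ε ^ 2 / (#s * (b - a) ^ 2)) := by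
  set Y : ι → Ω → ℝ := fun i ω ↦ X i ω - μ[X i]
  have hY_indep : iIndepFun Y μ := by
    exact h_indep.comp (fun i (x : ℝ) ↦ x - μ[X i]) fun i ↦ measurable_sub_const μ[X i]
  have hY : ∀ i ∈ s, HasSubgaussianMGF (Y i) ((‖b - a‖₊ / 2) ^ 2) μ :=
    fun i _ ↦ hasSubgaussianMGF_of_mem_Icc (hX i) (hab i)
  have h_upper := HasSubgaussianMGF.measure_sum_ge_le_of_iIndepFun hY_indep hY hε
  have h_lower := HasSubgaussianMGF.measure_sum_ge_le_of_iIndepFun (X := fun i ω ↦ -Y i ω)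
    (by exact hY_indep.comp (fun _ x ↦ -x) fun _ ↦ measurable_neg) (fun i hi ↦ (hY i hi).neg) hε
  have h_exp : -ε ^ 2 / (2 * ∑ i ∈ s, ((‖b - a‖₊ / 2) ^ 2 : NNReal)) =
      -2 * ε ^ 2 / (#s * (b - a) ^ 2) := by
    push_cast
    rw [sum_const, nsmul_eq_mul, Real.norm_eq_abs, div_pow, sq_abs,
      show (2 : ℝ) * (#s * ((b - a) ^ 2 / 2 ^ 2)) = #s * (b - a) ^ 2 / 2 by ring,
      div_div_eq_mul_div]
    ring
  have h_union : {ω | ε ≤ |∑ i ∈ s, Y i ω|} ⊆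
      {ω | ε ≤ ∑ i ∈ s, Y i ω} ∪ {ω | ε ≤ ∑ i ∈ s, -Y i ω} := by
    intro ω hω
    simpa [sum_neg_distrib, le_abs] using hω
  calc μ.real {ω | ε ≤ |∑ i ∈ s, Y i ω|}
      ≤ μ.real {ω | ε ≤ ∑ i ∈ s, Y i ω} + μ.real {ω | ε ≤ ∑ i ∈ s, -Y i ω} :=
        (measureReal_mono h_union).trans (measureReal_union_le _ _)
    _ ≤ 2 * exp (-2 * ε ^ 2 / (#s * (b - a) ^ 2)) := by
        rw [h_exp] at h_upper h_lower
        linarith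

namespace MeasureTheory.pdf.IsUniform

variable {Ω E : Type*} [MeasurableSpace Ω] [MeasurableSpace E] {P : Measure Ω} {μ : Measure E}
  {X : Ω → E} {s : Set E}

theorem ae_mem (hu : IsUniform X s P μ) (hX : AEMeasurable X P) (hs : MeasurableSet s) :
    ∀ᵐ ω ∂P, X ω ∈ s :=
  ae_of_ae_map hX (hu ▸ ae_cond_mem hs)

theorem aemeasurable_comp (hu : IsUniform X s P μ) (hX : AEMeasurable X P) {β : Type*}
    [MeasurableSpace β] {f : E → β} (hf : AEMeasurable f (μ.restrict s)) :
    AEMeasurable (f ∘ X) P :=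
  (hu ▸ hf.smul_measure _ : AEMeasurable f (P.map X)).comp_aemeasurable hX

theorem integral_comp {G : Type*} [NormedAddCommGroup G] [NormedSpace ℝ G]
    (hu : IsUniform X s P μ) (hX : AEMeasurable X P) {f : E → G}
    (hf : AEStronglyMeasurable f (μ.restrict s)) :
    ∫ ω, f (X ω) ∂P = (μ s).toReal⁻¹ • ∫ x in s, f x ∂μ := by
  rw [← integral_map hX (hu ▸ hf.smul_measure _), hu, ProbabilityTheory.cond,
    integral_smul_measure, ENNReal.toReal_inv]

end MeasureTheory.pdf.IsUniform

open Finset in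
theorem measureReal_abs_setIntegral_sub_ge_le_of_isUniform {Ω E ι : Type*} [MeasurableSpace Ω]
    [MeasurableSpace E] [Fintype ι] [Nonempty ι] {P : Measure Ω} [IsProbabilityMeasure P]
    {μ : Measure E} {s : Set E} {X : ι → Ω → E} (hX_indep : iIndepFun X P)
    (hX : ∀ i, AEMeasurable (X i) P) (hu : ∀ i, pdf.IsUniform (X i) s P μ) (hs : MeasurableSet s)
    (hμs : μ s ≠ 0) (hμs' : μ s ≠ ⊤) {f : E → ℝ} (hf : AEMeasurable f (μ.restrict s)) {m r : ℝ}
    (hfs : ∀ x ∈ s, |f x - m| ≤ r) {t : ℝ} (ht : 0 ≤ t) :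
    P.real {ω | t ≤ |(μ s).toReal / Fintype.card ι * ∑ i, f (X i ω) - ∫ x in s, f x ∂μ|} ≤
      2 * exp (-(Fintype.card ι * t ^ 2) / (2 * ((μ s).toReal * r) ^ 2)) := by
  set c := (μ s).toReal
  set K : ℝ := (Fintype.card ι : ℝ) with hK_def
  have hc : 0 < c := ENNReal.toReal_pos hμs hμs'
  have hK : 0 < K := Nat.cast_pos.mpr Fintype.card_pos
  have hmean (i : ι) : ∫ ω, f (X i ω) ∂P = (∫ x in s, f x ∂μ) / c := by
    rw [(hu i).integral_comp (hX i) hf.aestronglyMeasurable, smul_eq_mul, inv_mul_eq_div]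
  have hbound (i : ι) : ∀ᵐ ω ∂P, f (X i ω) ∈ Icc (m - r) (m + r) :=
    ((hu i).ae_mem (hX i) hs).mono fun ω hω ↦ by
      obtain ⟨h₁, h₂⟩ := abs_le.mp (hfs _ hω)
      exact ⟨by linarith, by linarith⟩
  have hevent : {ω | t ≤ |c / K * ∑ i, f (X i ω) - ∫ x in s, f x ∂μ|} =
      {ω | t * K / c ≤ |∑ i, ((f ∘ X i) ω - P[f ∘ X i])|} := by
    ext ω
    have hsum : c / K * ∑ i, f (X i ω) - ∫ x in s, f x ∂μ
        = c / K * ∑ i, ((f ∘ X i) ω - P[f ∘ X i]) := by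
      simp only [Function.comp_apply, hmean, sum_sub_distrib, sum_const, card_univ, nsmul_eq_mul,
        ← hK_def]
      field_simp
    rw [mem_ofPred_eq, mem_ofPred_eq, hsum, abs_mul, abs_of_pos (by positivity : 0 < c / K),
      div_le_iff₀ hc, div_mul_eq_mul_div, le_div_iff₀ hK, mul_comm c]
  rw [hevent]
  refine (measureReal_abs_sum_sub_integral_ge_le_of_iIndepFun
    (hX_indep.comp₀ (fun _ ↦ f) hX fun i ↦ ?_) (fun i ↦ (hu i).aemeasurable_comp (hX i) hf)
    hbound univ (by positivity : 0 ≤ t * K / c)).trans_eq ?_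
  · rw [hu i]
    exact hf.smul_measure _
  rw [card_univ, ← hK_def, show m + r - (m - r) = 2 * r by ring]
  field_simp

theorem ContinuousOn.aemeasurable_comp_of_mapsTo {α β γ : Type*} [MeasurableSpace α]
    [TopologicalSpace β] [MeasurableSpace β] [OpensMeasurableSpace β]
    [TopologicalSpace γ] [MeasurableSpace γ] [BorelSpace γ] {μ : Measure α}
    {F : β → γ} {T : Set β} {φ : α → β} {A : Set α} (hF : ContinuousOn F T)
    (hφ : Measurable φ) (hA : MeasurableSet A) (hφA : MapsTo φ A T) :
    AEMeasurable (F ∘ φ) (μ.restrict A) :=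
  aemeasurable_restrict_of_measurable_subtype hA <|
    hF.domRestrict.measurable.comp (f := hφA.restrict φ A T)
      (hφ.comp measurable_subtype_coe).subtype_mk

theorem mul_dist_le_abs_mul_diam {α : Type*} [PseudoMetricSpace α] {s : Set α}
    (hs : Bornology.IsBounded s) (L : ℝ) {x y : α} (hx : x ∈ s) (hy : y ∈ s) :
    L * dist x y ≤ |L| * Metric.diam s :=
  (mul_le_mul_of_nonneg_right (le_abs_self L) dist_nonneg).trans
    (mul_le_mul_of_nonneg_left (Metric.dist_le_diam_of_mem hs hx hy) (abs_nonneg L))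

section SeparatelyLipschitz

variable {E E' : Type*} [SeminormedAddCommGroup E] [SeminormedAddCommGroup E']
  {A : Set E} {S : Set E'} {F : E' → E → ℝ} {L : ℝ}

theorem continuousOn_uncurry_of_abs_sub_le
    (hLipA : ∀ s ∈ S, ∀ a ∈ A, ∀ a' ∈ A, |F s a - F s a'| ≤ L * ‖a - a'‖)
    (hLipS : ∀ s ∈ S, ∀ s' ∈ S, ∀ a ∈ A, |F s a - F s' a| ≤ L * ‖s - s'‖) :
    ContinuousOn (Function.uncurry F) (S ×ˢ A) :=
  continuousOn_prod_of_continuousOn_lipschitzOnWith _ L.toNNReal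
    (fun s hs ↦ (LipschitzOnWith.of_dist_le' fun a ha a' ha' ↦ by
      simpa only [dist_eq_norm, Real.norm_eq_abs, Function.uncurry_apply_pair] using
        hLipA s hs a ha a' ha').continuousOn)
    fun a ha ↦ LipschitzOnWith.of_dist_le' fun s hs s' hs' ↦ by
      simpa only [dist_eq_norm, Real.norm_eq_abs, Function.uncurry_apply_pair] using
        hLipS s hs s' hs' a ha

theorem abs_sub_le_abs_mul_diam_add_diam {g : E → E'} (hA : Bornology.IsBounded A)
    (hS : Bornology.IsBounded S) (hgA : MapsTo g A S)
    (hLipA : ∀ s ∈ S, ∀ a ∈ A, ∀ a' ∈ A, |F s a - F s a'| ≤ L * ‖a - a'‖)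
    (hLipS : ∀ s ∈ S, ∀ s' ∈ S, ∀ a ∈ A, |F s a - F s' a| ≤ L * ‖s - s'‖)
    {x y : E} (hx : x ∈ A) (hy : y ∈ A) :
    |F (g x) x - F (g y) y| ≤ |L| * (Metric.diam A + Metric.diam S) :=
  calc |F (g x) x - F (g y) y|
      ≤ |F (g x) x - F (g x) y| + |F (g x) y - F (g y) y| := abs_sub_le _ _ _
    _ ≤ L * dist x y + L * dist (g x) (g y) := by
        rw [dist_eq_norm, dist_eq_norm]
        exact add_le_add (hLipA _ (hgA hx) x hx y hy) (hLipS _ (hgA hx) _ (hgA hy) y hy)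
    _ ≤ |L| * Metric.diam A + |L| * Metric.diam S :=
        add_le_add (mul_dist_le_abs_mul_diam hA L hx hy)
          (mul_dist_le_abs_mul_diam hS L (hgA hx) (hgA hy))
    _ = |L| * (Metric.diam A + Metric.diam S) := (mul_add _ _ _).symm

end SeparatelyLipschitz

/-- Theorem 2 of the paper, second inequality (Monte Carlo error bound for the
continuous inflows): with `g` the true parent map taking values in the bounded
state space `S`, and `F` `L`-Lipschitz separately in the state and action
arguments, for i.i.d. uniform samples `a 1, …, a K` from `A` and every `t > 0`,
`ℙ(|(μ(A)/K) • Σ F(g(a k), a k) − ∫_A F(g(a), a) da| ≥ t)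
  ≤ 2 exp(−K t² / (2 (L μ(A) (diam A + diam S))²))`. -/
theorem cflownets_inflow_concentration {d m : ℕ}
    (A : Set (EuclideanSpace ℝ (Fin d)))
    (hAmeas : MeasurableSet A) (hAbdd : Bornology.IsBounded A)
    (hApos : 0 < volume A) (hAfin : volume A < ⊤)
    (S : Set (EuclideanSpace ℝ (Fin m))) (hSbdd : Bornology.IsBounded S)
    (g : EuclideanSpace ℝ (Fin d) → EuclideanSpace ℝ (Fin m))
    (hg : Measurable g) (hgA : ∀ a ∈ A, g a ∈ S)
    (F : EuclideanSpace ℝ (Fin m) → EuclideanSpace ℝ (Fin d) → ℝ) (L : ℝ)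
    (hLipA : ∀ s ∈ S, ∀ a ∈ A, ∀ a' ∈ A, |F s a - F s a'| ≤ L * ‖a - a'‖)
    (hLipS : ∀ s ∈ S, ∀ s' ∈ S, ∀ a ∈ A, |F s a - F s' a| ≤ L * ‖s - s'‖)
    {Ω : Type*} [MeasureSpace Ω] [IsProbabilityMeasure (ℙ : Measure Ω)]
    (K : ℕ) (hK : 0 < K)
    (a : Fin K → Ω → EuclideanSpace ℝ (Fin d))
    (hmeas : ∀ k, Measurable (a k))
    (hindep : iIndepFun a ℙ)
    (hunif : ∀ k, Measure.map (a k) ℙ = (volume A)⁻¹ • volume.restrict A)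
    (t : ℝ) (ht : 0 < t) :
    (ℙ {ω | t ≤ |((volume A).toReal / K) * ∑ k, F (g (a k ω)) (a k ω)
        - ∫ x in A, F (g x) x|}).toReal ≤
      2 * exp (-(K * t ^ 2) /
        (2 * (L * (volume A).toReal * (Metric.diam A + Metric.diam S)) ^ 2)) := by
  obtain ⟨x₀, hx₀⟩ : A.Nonempty := nonempty_of_measure_ne_zero hApos.ne'
  have : Nonempty (Fin K) := ⟨⟨0, hK⟩⟩
  have hF : AEMeasurable (fun x ↦ F (g x) x) (volume.restrict A) :=
    (continuousOn_uncurry_of_abs_sub_le hLipA hLipS).aemeasurable_comp_of_mapsTo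
      (hg.prodMk measurable_id) hAmeas fun x hx ↦ mk_mem_prod (hgA x hx) hx
  -- `hunif k` is `pdf.IsUniform (a k) A ℙ` unfolded.
  have hmc := measureReal_abs_setIntegral_sub_ge_le_of_isUniform hindep
    (fun k ↦ (hmeas k).aemeasurable) hunif hAmeas hApos.ne' hAfin.ne hF
    (fun x hx ↦ abs_sub_le_abs_mul_diam_add_diam hAbdd hSbdd hgA hLipA hLipS hx hx₀) ht.le
  rw [Fintype.card_fin] at hmc
  refine hmc.trans_eq ?_
  simp only [mul_pow, sq_abs]
  ring_nf
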